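/- arXiv:2603.10386 — 2 statements merged into one kernel-verified Lean document; each statement's English description precedes it below -/
import Mathlib

section
/- (Theorem 4.6(4)) Under the hypotheses of the two hyperelliptic flows, the branch α_a of al_a satisfies ∂_t α_a = [ (1/2) ∂_s (x_1 + ⋯ + x_g) − ((x_1 + ⋯ + x_g) − b_a) ψ_a ] · α_a on U. -/
open Finset

noncomputable def alFd (g : ℕ) (x : Fin g → ℂ × ℂ → ℂ) (i : Fin g) (p : ℂ × ℂ) : ℂ :=
  ∏ j ∈ Finset.univ.erase i, (x i p - x j p)

noncomputable def alPsi (g : ℕ) (x y : Fin g → ℂ × ℂ → ℂ) (ba : ℂ) (p : ℂ × ℂ) : ℂ :=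
  ∑ i : Fin g, y i p / (alFd g x i p * (x i p - ba))

noncomputable def dS (F : ℂ × ℂ → ℂ) (p : ℂ × ℂ) : ℂ :=
  deriv (fun z => F (p.1, z)) p.2

noncomputable def dT (F : ℂ × ℂ → ℂ) (p : ℂ × ℂ) : ℂ :=
  deriv (fun z => F (z, p.2)) p.1

/-!
Differentiating `α² = ∏ᵢ (xᵢ - b)` along `t` gives `2 α ∂ₜα = ∑ᵢ (∏_{j ≠ i} (xⱼ - b)) ∂ₜxᵢ`.
Writing `vᵢ = yᵢ / F'(xᵢ)`, the two flows read `∂ₛxᵢ = 2 vᵢ` and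
`∂ₜxᵢ = -2 vᵢ ∑_{j ≠ i} xⱼ = 2 vᵢ ((xᵢ - b) - (∑ⱼ xⱼ - b))`, so multiplying by `∏_{j ≠ i} (xⱼ - b)`
turns each summand into `α² (∂ₛxᵢ - 2 (∑ⱼ xⱼ - b) vᵢ / (xᵢ - b))`. Summing over `i` and
cancelling `2 α ≠ 0` gives the formula.
-/

theorem DifferentiableAt.hasDerivAt_dT {F : ℂ × ℂ → ℂ} {p : ℂ × ℂ}
    (hF : DifferentiableAt ℂ F p) : HasDerivAt (fun z => F (z, p.2)) (dT F p) p.1 :=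
  (hF.comp p.1 (differentiableAt_id.prodMk (differentiableAt_const _))).hasDerivAt

theorem DifferentiableAt.hasDerivAt_dS {F : ℂ × ℂ → ℂ} {p : ℂ × ℂ}
    (hF : DifferentiableAt ℂ F p) : HasDerivAt (fun z => F (p.1, z)) (dS F p) p.2 :=
  (hF.comp p.2 ((differentiableAt_const _).prodMk differentiableAt_id)).hasDerivAt

theorem dS_sum {ι : Type*} (s : Finset ι) {F : ι → ℂ × ℂ → ℂ} {p : ℂ × ℂ}
    (hF : ∀ i ∈ s, DifferentiableAt ℂ (F i) p) :
    dS (fun q => ∑ i ∈ s, F i q) p = ∑ i ∈ s, dS (F i) p :=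
  (HasDerivAt.fun_sum fun i hi => (hF i hi).hasDerivAt_dS).deriv

theorem eventually_mk_snd_mem_of_isOpen {U : Set (ℂ × ℂ)} (hU : IsOpen U) {p : ℂ × ℂ}
    (hp : p ∈ U) : ∀ᶠ z in nhds p.1, (z, p.2) ∈ U :=
  (continuous_id.prodMk continuous_const).continuousAt.preimage_mem_nhds (hU.mem_nhds hp)

theorem HasDerivAt.two_mul_mul_eq_of_sq_eventuallyEq_prod {𝕜 ι : Type*}
    [NontriviallyNormedField 𝕜] [DecidableEq ι] (s : Finset ι) {f : 𝕜 → 𝕜} {f' : 𝕜}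
    {u : ι → 𝕜 → 𝕜} {u' : ι → 𝕜} {z : 𝕜} (hf : HasDerivAt f f' z)
    (hu : ∀ i ∈ s, HasDerivAt (u i) (u' i) z)
    (h : (fun w => f w ^ 2) =ᶠ[nhds z] fun w => ∏ i ∈ s, u i w) :
    2 * f z * f' = ∑ i ∈ s, (∏ j ∈ s.erase i, u j z) * u' i := by
  have hsq : HasDerivAt (fun w => f w ^ 2) (2 * f z * f') z := by
    simpa using hf.fun_pow 2
  simpa using hsq.unique ((HasDerivAt.fun_finsetProd hu).congr_of_eventuallyEq h)

theorem sum_prod_erase_sub_mul_flow {ι K : Type*} [Fintype ι] [DecidableEq ι] [Field K]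
    (x v : ι → K) {c : K} (hx : ∀ i, x i ≠ c) :
    ∑ i, (∏ j ∈ univ.erase i, (x j - c)) * (2 * v i * -∑ j ∈ univ.erase i, x j)
      = (∏ i, (x i - c)) * (∑ i, 2 * v i - 2 * (∑ i, x i - c) * ∑ i, v i / (x i - c)) := by
  rw [mul_sub, mul_sum, mul_sum, mul_sum, ← sum_sub_distrib]
  refine sum_congr rfl fun i _ => ?_
  have hQ : ∏ j, (x j - c) = (∏ j ∈ univ.erase i, (x j - c)) * (x i - c) :=
    (prod_erase_mul _ _ (mem_univ i)).symm
  have hS : ∑ j, x j = (∑ j ∈ univ.erase i, x j) + x i :=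
    (sum_erase_add _ _ (mem_univ i)).symm
  rw [hQ, hS]
  field_simp [sub_ne_zero.mpr (hx i)]
  ring

theorem stmt5_general
    (g : ℕ)
    (b : Fin (2 * g + 1) → ℂ)
    (U : Set (ℂ × ℂ)) (hU : IsOpen U)
    (x y : Fin g → ℂ × ℂ → ℂ)
    (hx : ∀ i, DifferentiableOn ℂ (x i) U)
    (hflowS : ∀ p ∈ U, ∀ i, dS (x i) p = 2 * y i p / alFd g x i p)
    (hflowT : ∀ p ∈ U, ∀ i,
      dT (x i) p = 2 * y i p * (-∑ j ∈ Finset.univ.erase i, x j p) / alFd g x i p)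
    (a : Fin (2 * g + 1))
    (hxa : ∀ p ∈ U, ∀ i, x i p ≠ b a)
    (α : ℂ × ℂ → ℂ) (hα : DifferentiableOn ℂ α U)
    (hαne : ∀ p ∈ U, α p ≠ 0)
    (hα2 : ∀ p ∈ U, (α p) ^ 2 = ∏ i : Fin g, (x i p - b a))
 :
    ∀ p ∈ U,
      dT α p
        = ((1 / 2) * dS (fun q => ∑ i : Fin g, x i q) p
            - ((∑ i : Fin g, x i p) - b a) * alPsi g x y (b a) p) * α p := by
  intro p hp
  have hdiff {F : ℂ × ℂ → ℂ} (hF : DifferentiableOn ℂ F U) : DifferentiableAt ℂ F p :=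
    hF.differentiableAt (hU.mem_nhds hp)
  have hsq : 2 * α p * dT α p = ∑ i, (∏ j ∈ univ.erase i, (x j p - b a)) * dT (x i) p :=
    (hdiff hα).hasDerivAt_dT.two_mul_mul_eq_of_sq_eventuallyEq_prod univ
      (fun i _ => (hdiff (hx i)).hasDerivAt_dT.sub_const (b a))
      ((eventually_mk_snd_mem_of_isOpen hU hp).mono fun z hz => hα2 _ hz)
  set v := fun i => y i p / alFd g x i p
  have hT : ∀ i, dT (x i) p = 2 * v i * -∑ j ∈ univ.erase i, x j p := fun i => by
    rw [hflowT p hp i]; ring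
  have hS : dS (fun q => ∑ i, x i q) p = ∑ i, 2 * v i := by
    rw [dS_sum _ fun i _ => hdiff (hx i)]
    exact sum_congr rfl fun i _ => (hflowS p hp i).trans (mul_div_assoc _ _ _)
  have hψ : alPsi g x y (b a) p = ∑ i, v i / (x i p - b a) :=
    sum_congr rfl fun i _ => (div_div _ _ _).symm
  apply mul_left_cancel₀ (mul_ne_zero two_ne_zero (hαne p hp))
  rw [hsq, sum_congr rfl fun i _ => by rw [hT i],
    sum_prod_erase_sub_mul_flow (fun i => x i p) v (hxa p hp), hS, hψ, ← hα2 p hp]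
  ring

theorem stmt5
    (g : ℕ) (hg : 2 ≤ g)
    (b : Fin (2 * g + 1) → ℂ) (hb : Function.Injective b)
    (U : Set (ℂ × ℂ)) (hU : IsOpen U) (hUne : U.Nonempty)
    (x y : Fin g → ℂ × ℂ → ℂ)
    (hx : ∀ i, DifferentiableOn ℂ (x i) U)
    (hy : ∀ i, DifferentiableOn ℂ (y i) U)
    (hdist : ∀ p ∈ U, ∀ i j, i ≠ j → x i p ≠ x j p)
    (hy2 : ∀ p ∈ U, ∀ i, (y i p) ^ 2 = ∏ j, (x i p - b j))
    (hyne : ∀ p ∈ U, ∀ i, y i p ≠ 0)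
    (hflowS : ∀ p ∈ U, ∀ i, dS (x i) p = 2 * y i p / alFd g x i p)
    (hflowT : ∀ p ∈ U, ∀ i,
      dT (x i) p = 2 * y i p * (-∑ j ∈ Finset.univ.erase i, x j p) / alFd g x i p)
    (a : Fin (2 * g + 1))
    (hxa : ∀ p ∈ U, ∀ i, x i p ≠ b a)
    (α : ℂ × ℂ → ℂ) (hα : DifferentiableOn ℂ α U)
    (hαne : ∀ p ∈ U, α p ≠ 0)
    (hα2 : ∀ p ∈ U, (α p) ^ 2 = ∏ i : Fin g, (x i p - b a))
 :
    ∀ p ∈ U,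
      dT α p
        = ((1 / 2) * dS (fun q => ∑ i : Fin g, x i q) p
            - ((∑ i : Fin g, x i p) - b a) * alPsi g x y (b a) p) * α p :=
  stmt5_general g b U hU x y hx hflowS hflowT a hxa α hα hαne hα2
end

section
/- (Theorem 5.7(2), with the index typo of the paper corrected: the cubic coefficient involves ψ_1, not ψ_2) Under the hypotheses of the two hyperelliptic flows with the two branch indices a = 1, 2, the ratio R := α_2/α_1 satisfies 4 ∂_t R − [ 2 λ_{2g} + 3 (b_1 + b_2) ] ∂_s R + 6 ψ_1^2 ∂_s R − ∂_s^3 R + 6 (b_1 − b_2) ψ_1 R = 0 on U. -/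
open Finset

/-!
Along the `s`-flow the `x i` are the roots of `F = ∏ (X - x i)` and `ψ_β = -V(β) / F(β)`, where
`V` is the Lagrange interpolant of the `y i` at the `x i`. Differentiating `V(x i) = y i` and
`y i ^ 2 = f(x i)` along the flow shows that `∂ₛV · F + V² + (X + λ + 2 ∑ x i) · F² - f` vanishes
to second order at every `x i`; having degree `< 2g`, it is zero. Evaluated at a branch point
`b a`, this is the Riccati equation `∂ₛψ_a = b a + λ + 2 ∑ x i - ψ_a²`.

Since `α_a² = ∏ (x i - b a)`, the logarithmic derivatives of `α_a` are `∂ₛ log α_a = ψ_a` and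
`∂ₜ log α_a = (b a - ∑ x i) ψ_a + ∑ y i / F'(x i)`. Hence `∂ₛR = (ψ₂ - ψ₁) R`, and two more
`s`-derivatives, computed with the Riccati equations, express `∂ₛ³R` through `ψ₁`, `ψ₂` and `R`.
-/

open Polynomial Lagrange Filter Topology

namespace Polynomial

variable {R : Type*} [CommRing R]

theorem Monic.degree_sub_lt_of_nextCoeff_eq {p q : R[X]} (hp : p.Monic) (hq : q.Monic)
    (hdeg : p.natDegree = q.natDegree) (hnext : p.nextCoeff = q.nextCoeff) :
    (p - q).degree < (p.natDegree - 1 : ℕ) := by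
  rw [degree_lt_iff_coeff_zero]
  intro m hm
  rw [coeff_sub, sub_eq_zero]
  rcases lt_trichotomy m p.natDegree with hlt | rfl | hgt
  · have hpos : 0 < p.natDegree := by omega
    rw [show m = p.natDegree - 1 by omega, ← nextCoeff_of_natDegree_pos hpos, hdeg,
      ← nextCoeff_of_natDegree_pos (hdeg ▸ hpos), hnext]
  · rw [hp.coeff_natDegree, hdeg, hq.coeff_natDegree]
  · rw [coeff_eq_zero_of_natDegree_lt hgt, coeff_eq_zero_of_natDegree_lt (hdeg ▸ hgt)]

theorem degree_mul_lt_of_lt_of_le {p q : R[X]} {m n : ℕ} (hp : p.degree < m) (hq : q.degree ≤ n) :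
    (p * q).degree < (m + n : ℕ) := by
  rcases eq_or_ne q 0 with rfl | hq0
  · rw [mul_zero, degree_zero]
    exact WithBot.bot_lt_coe _
  rw [Nat.cast_add]
  exact (degree_mul_le _ _).trans_lt
    (WithBot.add_lt_add_of_lt_of_le (degree_ne_bot.2 hq0) hp hq)

theorem sq_dvd_of_isRoot_of_isRoot_derivative [IsDomain R] {p : R[X]} {a : R}
    (h0 : p.IsRoot a) (h1 : p.derivative.IsRoot a) : (X - C a) ^ 2 ∣ p := by
  rcases eq_or_ne p 0 with rfl | hp
  · exact dvd_zero _
  exact (le_rootMultiplicity_iff hp).1 ((one_lt_rootMultiplicity_iff_isRoot hp).2 ⟨h0, h1⟩)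

end Polynomial

namespace Lagrange

variable {K ι : Type*} [Field K] [Fintype ι] {v : ι → K}

theorem nodal_sq_dvd (hv : Function.Injective v) {p : K[X]}
    (h0 : ∀ i, p.IsRoot (v i)) (h1 : ∀ i, p.derivative.IsRoot (v i)) :
    nodal univ v ^ 2 ∣ p := by
  rw [nodal, ← prod_pow]
  refine prod_dvd_of_coprime (fun i _ j _ hij => ?_) fun i _ =>
    sq_dvd_of_isRoot_of_isRoot_derivative (h0 i) (h1 i)
  exact (pairwise_coprime_X_sub_C hv hij).pow

theorem eval_derivative_nodal_at_node [DecidableEq ι] (v : ι → K) (i : ι) :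
    (nodal univ v).derivative.eval (v i) = ∏ j ∈ univ.erase i, (v i - v j) := by
  rw [eval_nodal_derivative_eval_node_eq (mem_univ i), eval_nodal]

theorem mul_nodal_add_sq_add_mul_nodal_sq_eq {f A V : K[X]} (hv : Function.Injective v)
    (hf : f.Monic) (hfdeg : f.natDegree = 2 * Fintype.card ι + 1)
    (hA : A.degree < Fintype.card ι) (hV : V.degree < Fintype.card ι)
    (h0 : ∀ i, V.eval (v i) ^ 2 = f.eval (v i))
    (h1 : ∀ i, A.eval (v i) * (nodal univ v).derivative.eval (v i)
      + 2 * V.eval (v i) * V.derivative.eval (v i) = f.derivative.eval (v i)) :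
    A * nodal univ v + V ^ 2 + (X + C (f.nextCoeff + 2 * ∑ i, v i)) * nodal univ v ^ 2 = f := by
  set F := nodal univ v
  set G := (X + C (f.nextCoeff + 2 * ∑ i, v i)) * F ^ 2
  have hF : F.natDegree = Fintype.card ι := by simp [F, natDegree_nodal]
  have hFdeg : F.degree = Fintype.card ι := by simp [F, degree_nodal]
  have hG : G.Monic := (monic_X_add_C _).mul (nodal_monic.pow 2)
  have hGdeg : G.natDegree = f.natDegree := by
    rw [(monic_X_add_C _).natDegree_mul (nodal_monic.pow 2), natDegree_X_add_C, natDegree_pow, hF,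
      hfdeg]
    ring
  have hGnext : G.nextCoeff = f.nextCoeff := by
    rw [(monic_X_add_C _).nextCoeff_mul (nodal_monic.pow 2), nextCoeff_X_add_C,
      nodal_monic.nextCoeff_pow, nodal, prod_X_sub_C_nextCoeff, nsmul_eq_mul]
    push_cast
    ring
  have hdvd : F ^ 2 ∣ A * F + V ^ 2 + G - f := by
    apply nodal_sq_dvd hv
    · intro i
      simp [F, G, eval_nodal_at_node, h0]
    · intro i
      simp only [IsRoot, F, G, derivative_sub, derivative_add, derivative_mul, derivative_pow,
        eval_sub, eval_add, eval_mul, eval_pow, eval_C, eval_nodal_at_node (mem_univ i), ← h1]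
      push_cast
      ring
  rw [← sub_eq_zero]
  refine eq_zero_of_dvd_of_degree_lt hdvd ?_
  rw [show (F ^ 2).degree = (Fintype.card ι + Fintype.card ι : ℕ) by
    rw [degree_pow, hFdeg]; norm_num; ring, add_sub_assoc]
  refine (degree_add_le _ _).trans_lt (max_lt ((degree_add_le _ _).trans_lt
    (max_lt (degree_mul_lt_of_lt_of_le hA hFdeg.le) ?_)) ?_)
  · rw [sq]
    exact degree_mul_lt_of_lt_of_le hV hV.le
  · have := hG.degree_sub_lt_of_nextCoeff_eq hf hGdeg hGnext
    rwa [hGdeg, hfdeg, Nat.add_sub_cancel, two_mul] at this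

end Lagrange

theorem hasDerivAt_eval_sum_C_mul {ι : Type*} (s : Finset ι) (L : ι → ℂ[X]) {v : ι → ℂ → ℂ}
    {v' : ι → ℂ} {z : ℂ → ℂ} {z' t : ℂ} (hv : ∀ i ∈ s, HasDerivAt (v i) (v' i) t)
    (hz : HasDerivAt z z' t) :
    HasDerivAt (fun τ => (∑ i ∈ s, C (v i τ) * L i).eval (z τ))
      ((∑ i ∈ s, C (v' i) * L i).eval (z t)
        + (∑ i ∈ s, C (v i t) * L i).derivative.eval (z t) * z') t := by
  simp only [eval_finsetSum, eval_mul, eval_C, derivative_sum, derivative_mul, derivative_C,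
    zero_mul, zero_add, sum_mul, ← sum_add_distrib]
  exact HasDerivAt.fun_sum fun i hi => by
    simpa [mul_assoc] using (hv i hi).fun_mul (((L i).hasDerivAt (z t)).comp t hz)

theorem hasDerivAt_of_sq_eq_prod {ι : Type*} [Fintype ι] [DecidableEq ι] {a : ℂ → ℂ}
    {u : ι → ℂ → ℂ} {u' : ι → ℂ} {s : ℂ} (ha : DifferentiableAt ℂ a s)
    (hsq : ∀ᶠ t in 𝓝 s, a t ^ 2 = ∏ i, u i t) (hu : ∀ i, HasDerivAt (u i) (u' i) s)
    (hu0 : ∀ i, u i s ≠ 0) :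
    HasDerivAt a (a s / 2 * ∑ i, u' i / u i s) s := by
  have ha0 : a s ≠ 0 := fun h =>
    prod_ne_zero_iff.2 (fun i _ => hu0 i) (by rw [← hsq.self_of_nhds, h]; ring)
  have h := (ha.hasDerivAt.pow 2).unique
    ((HasDerivAt.fun_finsetProd fun i _ => hu i).congr_of_eventuallyEq hsq)
  have hcofactor : ∀ i, ∏ j ∈ univ.erase i, u j s = a s ^ 2 / u i s := fun i =>
    eq_div_of_mul_eq (hu0 i) (by rw [prod_erase_mul _ _ (mem_univ i), hsq.self_of_nhds])
  simp only [hcofactor, smul_eq_mul, Nat.cast_ofNat, Nat.add_one_sub_one, pow_one] at h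
  refine ha.hasDerivAt.congr_deriv (mul_left_cancel₀ (mul_ne_zero two_ne_zero ha0) ?_)
  rw [h, mul_sum, mul_sum]
  refine sum_congr rfl fun i _ => ?_
  field_simp [hu0 i]

theorem HasDerivAt.div_of_eq_mul_self {a b : ℂ → ℂ} {p q s : ℂ} (ha : HasDerivAt a (p * a s) s)
    (hb : HasDerivAt b (q * b s) s) (hb0 : b s ≠ 0) :
    HasDerivAt (fun t => a t / b t) ((p - q) * (a s / b s)) s :=
  (ha.div hb hb0).congr_deriv (by field_simp)

theorem hasDerivAt_deriv_of_isOpen {F G : ℂ → ℂ} {G' s : ℂ} {S : Set ℂ} (hS : IsOpen S)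
    (hF : ∀ t ∈ S, HasDerivAt F (G t) t) (hs : s ∈ S) (hG : HasDerivAt G G' s) :
    HasDerivAt (deriv F) G' s :=
  hG.congr_of_eventuallyEq (eventually_of_mem (hS.mem_nhds hs) fun t ht => (hF t ht).deriv)

section Interpolation

variable {ι : Type*} [Fintype ι] [DecidableEq ι]

theorem differentiableAt_eval_interpolate (c : ℂ) {x y : ι → ℂ → ℂ} {t : ℂ}
    (hx : ∀ i, DifferentiableAt ℂ (x i) t) (hy : ∀ i, DifferentiableAt ℂ (y i) t)
    (hinj : Function.Injective (x · t)) :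
    DifferentiableAt ℂ (fun τ => (interpolate univ (x · τ) (y · τ)).eval c) t := by
  simp only [interpolate_apply, eval_finsetSum, eval_mul, eval_C, Lagrange.basis, basisDivisor,
    eval_prod, eval_sub, eval_X]
  refine DifferentiableAt.fun_sum fun i _ => (hy i).mul <| DifferentiableAt.fun_finsetProd
    fun j hj => ((hx i).sub (hx j)).inv ?_ |>.mul ((differentiableAt_const c).sub (hx j))
  exact sub_ne_zero.2 (hinj.ne (ne_of_mem_erase hj).symm)

theorem exists_hasDerivAt_eval_interpolate {x y : ι → ℂ → ℂ} {t : ℂ}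
    (hx : ∀ i, DifferentiableAt ℂ (x i) t) (hy : ∀ i, DifferentiableAt ℂ (y i) t)
    (hinj : ∀ᶠ τ in 𝓝 t, Function.Injective (x · τ)) :
    ∃ A : ℂ[X], A.degree < Fintype.card ι ∧ ∀ {z : ℂ → ℂ} {z' : ℂ}, HasDerivAt z z' t →
      HasDerivAt (fun τ => (interpolate univ (x · τ) (y · τ)).eval (z τ))
        (A.eval (z t) + (interpolate univ (x · t) (y · t)).derivative.eval (z t) * z') t := by
  set V := fun τ => interpolate univ (x · τ) (y · τ)
  -- Interpolating at the nodes frozen at `t` leaves only the values `(V τ).eval (c m)` depending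
  -- on `τ`, and these are differentiable.
  set c := (x · t)
  have hc : Set.InjOn c (univ : Finset ι) := hinj.self_of_nhds.injOn
  have hV : ∀ᶠ τ in 𝓝 t, V τ = interpolate univ c fun m => (V τ).eval (c m) :=
    hinj.mono fun τ hτ => eq_interpolate hc (degree_interpolate_lt _ hτ.injOn)
  refine ⟨interpolate univ c fun m => deriv (fun τ => (V τ).eval (c m)) t,
    by rw [← card_univ]; exact degree_interpolate_lt _ hc, fun {z z'} hz => ?_⟩
  have h := hasDerivAt_eval_sum_C_mul univ (Lagrange.basis univ c) (fun m _ =>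
    (differentiableAt_eval_interpolate (c m) hx hy hinj.self_of_nhds).hasDerivAt) hz
  rw [← interpolate_apply, ← interpolate_apply, ← hV.self_of_nhds] at h
  exact h.congr_of_eventuallyEq
    (hV.mono fun τ hτ => congrArg (eval (z τ)) (hτ.trans (interpolate_apply _ _ _)))

end Interpolation

section Dubrovin

variable {ι : Type*} [Fintype ι] [DecidableEq ι]

def lagrangePsi {K : Type*} [Field K] (v w : ι → K) (β : K) : K :=
  ∑ i, w i / ((∏ j ∈ univ.erase i, (v i - v j)) * (v i - β))

theorem lagrangePsi_eq_neg_eval_interpolate_div {K : Type*} [Field K] {v : ι → K}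
    (w : ι → K) {β : K} (hβ : ∀ i, v i ≠ β) :
    lagrangePsi v w β = -(interpolate univ v w).eval β / (nodal univ v).eval β := by
  have hF : (nodal univ v).eval β ≠ 0 := eval_nodal_not_at_node fun i _ => (hβ i).symm
  rw [eval_interpolate_not_at_node w fun i _ => (hβ i).symm, lagrangePsi, neg_mul_eq_mul_neg,
    mul_div_cancel_left₀ _ hF, ← sum_neg_distrib]
  refine sum_congr rfl fun i _ => ?_
  rw [nodalWeight, prod_inv_distrib, div_eq_mul_inv, mul_inv, ← neg_sub β, inv_neg]
  ring

theorem lagrangePsi_mul_neg_sum_erase {K : Type*} [Field K] {v : ι → K} (w : ι → K) {β : K}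
    (hβ : ∀ i, v i ≠ β) :
    lagrangePsi v (fun i => w i * -∑ j ∈ univ.erase i, v j) β
      = (β - ∑ j, v j) * lagrangePsi v w β + ∑ i, w i / ∏ j ∈ univ.erase i, (v i - v j) := by
  simp only [lagrangePsi, mul_sum, ← sum_add_distrib]
  refine sum_congr rfl fun i _ => ?_
  have hχ : -∑ j ∈ univ.erase i, v j = (v i - β) + (β - ∑ j, v j) := by
    rw [← add_sum_erase _ _ (mem_univ i)]
    ring
  have hβi := sub_ne_zero.2 (hβ i)
  rw [hχ]
  rcases eq_or_ne (∏ j ∈ univ.erase i, (v i - v j)) 0 with h0 | h0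
  · simp [h0]
  field_simp
  ring

theorem hasDerivAt_of_sq_eq_prod_sub {a : ℂ → ℂ} {x w : ι → ℂ → ℂ} {β s : ℂ}
    (ha : DifferentiableAt ℂ a s) (hsq : ∀ᶠ t in 𝓝 s, a t ^ 2 = ∏ i, (x i t - β))
    (hx : ∀ i, HasDerivAt (x i) (2 * w i s / ∏ j ∈ univ.erase i, (x i s - x j s)) s)
    (hxβ : ∀ i, x i s ≠ β) :
    HasDerivAt a (lagrangePsi (x · s) (w · s) β * a s) s := by
  refine (hasDerivAt_of_sq_eq_prod ha hsq (fun i => (hx i).sub_const β)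
    fun i => sub_ne_zero.2 (hxβ i)).congr_deriv ?_
  rw [mul_comm, lagrangePsi, sum_mul, sum_mul]
  refine sum_congr rfl fun i _ => ?_
  rw [← div_div]
  ring

/-- The `u_g`-flow of the paper on an open set `S` of times: Dubrovin's equations for points
`(x i, y i)` of the curve `y ^ 2 = f(x)`. -/
structure IsDubrovinFlow (f : ℂ[X]) (x y : ι → ℂ → ℂ) (S : Set ℂ) : Prop where
  isOpen : IsOpen S
  injective : ∀ s ∈ S, Function.Injective (x · s)
  sq_eq : ∀ s ∈ S, ∀ i, y i s ^ 2 = f.eval (x i s)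
  ne_zero : ∀ s ∈ S, ∀ i, y i s ≠ 0
  differentiableAt : ∀ s ∈ S, ∀ i, DifferentiableAt ℂ (y i) s
  hasDerivAt : ∀ s ∈ S, ∀ i, HasDerivAt (x i) (2 * y i s / ∏ j ∈ univ.erase i, (x i s - x j s)) s

namespace IsDubrovinFlow

variable {f : ℂ[X]} {x y : ι → ℂ → ℂ} {S : Set ℂ} {s : ℂ}

theorem eventually_mem (h : IsDubrovinFlow f x y S) (hs : s ∈ S) : ∀ᶠ t in 𝓝 s, t ∈ S :=
  h.isOpen.mem_nhds hs

theorem prod_sub_ne_zero (h : IsDubrovinFlow f x y S) (hs : s ∈ S) (i : ι) :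
    ∏ j ∈ univ.erase i, (x i s - x j s) ≠ 0 :=
  prod_ne_zero_iff.2 fun _ hj => sub_ne_zero.2 ((h.injective s hs).ne (ne_of_mem_erase hj).symm)

theorem hasDerivAt_y (h : IsDubrovinFlow f x y S) (hs : s ∈ S) (i : ι) :
    HasDerivAt (y i) (f.derivative.eval (x i s) / ∏ j ∈ univ.erase i, (x i s - x j s)) s := by
  have hy := (h.differentiableAt s hs i).hasDerivAt
  have hsq := (hy.pow 2).unique (((f.hasDerivAt (x i s)).comp s (h.hasDerivAt s hs i))
    |>.congr_of_eventuallyEq ((h.eventually_mem hs).mono fun t ht => h.sq_eq t ht i))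
  refine hy.congr_deriv (mul_left_cancel₀ (mul_ne_zero two_ne_zero (h.ne_zero s hs i)) ?_)
  simp only [Nat.cast_ofNat, Nat.add_one_sub_one, pow_one] at hsq
  rw [hsq]
  ring

theorem hasDerivAt_eval_nodal (h : IsDubrovinFlow f x y S) (hs : s ∈ S) (β : ℂ) :
    HasDerivAt (fun t => (nodal univ (x · t)).eval β)
      (-2 * (interpolate univ (x · s) (y · s)).eval β) s := by
  simp only [eval_nodal]
  refine (HasDerivAt.fun_finsetProd fun i _ => (h.hasDerivAt s hs i).const_sub β).congr_deriv ?_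
  simp only [interpolate_apply, eval_finsetSum, eval_mul, eval_C, Lagrange.basis, basisDivisor,
    eval_prod, eval_sub, eval_X, mul_sum, prod_mul_distrib, prod_inv_distrib, smul_eq_mul]
  refine sum_congr rfl fun i _ => ?_
  ring

theorem hasDerivAt_lagrangePsi (h : IsDubrovinFlow f x y S) (hf : f.Monic)
    (hfdeg : f.natDegree = 2 * Fintype.card ι + 1) {β : ℂ} (hβ : f.IsRoot β)
    (hxβ : ∀ t ∈ S, ∀ i, x i t ≠ β) (hs : s ∈ S) :
    HasDerivAt (fun t => lagrangePsi (x · t) (y · t) β)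
      (β + f.nextCoeff + 2 * ∑ i, x i s - lagrangePsi (x · s) (y · s) β ^ 2) s := by
  set V := fun t => interpolate univ (x · t) (y · t)
  have hinj := h.injective s hs
  obtain ⟨A, hAdeg, hA⟩ := exists_hasDerivAt_eval_interpolate
    (fun i => (h.hasDerivAt s hs i).differentiableAt) (h.differentiableAt s hs)
    ((h.eventually_mem hs).mono h.injective)
  have hV : ∀ t ∈ S, ∀ i, (V t).eval (x i t) = y i t := fun t ht i =>
    eval_interpolate_at_node _ (h.injective t ht).injOn (mem_univ i)
  have hnode : ∀ i, A.eval (x i s) * (nodal univ (x · s)).derivative.eval (x i s)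
      + 2 * (V s).eval (x i s) * (V s).derivative.eval (x i s) = f.derivative.eval (x i s) := by
    intro i
    have hyi := (hA (h.hasDerivAt s hs i)).congr_of_eventuallyEq
      ((h.eventually_mem hs).mono fun t ht => (hV t ht i).symm) |>.unique (h.hasDerivAt_y hs i)
    have hd := h.prod_sub_ne_zero hs i
    rw [eval_derivative_nodal_at_node (x · s) i, hV s hs i]
    field_simp at hyi
    linear_combination hyi
  have hmumford := congrArg (eval β) <| mul_nodal_add_sq_add_mul_nodal_sq_eq hinj hf hfdeg hAdeg
    (degree_interpolate_lt _ hinj.injOn) (fun i => by rw [hV s hs i, h.sq_eq s hs i]) hnode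
  simp only [eval_add, eval_mul, eval_pow, eval_X, eval_C, hβ.eq_zero] at hmumford
  have hF0 : (nodal univ (x · s)).eval β ≠ 0 := eval_nodal_not_at_node fun i _ => (hxβ s hs i).symm
  have hψ := ((hA (hasDerivAt_const s β)).neg.div (h.hasDerivAt_eval_nodal hs β) hF0)
    |>.congr_of_eventuallyEq ((h.eventually_mem hs).mono fun t ht =>
      lagrangePsi_eq_neg_eval_interpolate_div _ (hxβ t ht))
  refine hψ.congr_deriv ?_
  rw [lagrangePsi_eq_neg_eval_interpolate_div _ (hxβ s hs), Pi.neg_apply, mul_zero, add_zero]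
  field_simp
  linear_combination -hmumford

end IsDubrovinFlow

end Dubrovin

theorem deriv_deriv_deriv_of_riccati {S : Set ℂ} (hS : IsOpen S) {R ψ₁ ψ₂ e : ℂ → ℂ} {b₁ b₂ : ℂ}
    (hψ₁ : ∀ s ∈ S, HasDerivAt ψ₁ (b₁ + e s - ψ₁ s ^ 2) s)
    (hψ₂ : ∀ s ∈ S, HasDerivAt ψ₂ (b₂ + e s - ψ₂ s ^ 2) s)
    (hR : ∀ s ∈ S, HasDerivAt R ((ψ₂ s - ψ₁ s) * R s) s) {s : ℂ} (hs : s ∈ S) :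
    deriv (deriv (deriv R)) s = ((b₂ - 3 * b₁ - 2 * e s) * (ψ₂ s - ψ₁ s)
      + 6 * ψ₁ s ^ 2 * (ψ₂ s - ψ₁ s) - 2 * (b₂ - b₁) * ψ₁ s) * R s := by
  have hR' : ∀ t ∈ S, HasDerivAt (deriv R) ((b₂ - b₁ - 2 * ψ₁ t * (ψ₂ t - ψ₁ t)) * R t) t :=
    fun t ht => hasDerivAt_deriv_of_isOpen hS hR ht
      ((((hψ₂ t ht).fun_sub (hψ₁ t ht)).fun_mul (hR t ht)).congr_deriv (by ring))
  refine (hasDerivAt_deriv_of_isOpen hS hR' hs ?_).deriv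
  refine (((((hψ₁ s hs).const_mul 2).fun_mul ((hψ₂ s hs).fun_sub (hψ₁ s hs))).const_sub
    (b₂ - b₁)).fun_mul (hR s hs)).congr_deriv ?_
  ring

section Slices

variable {U : Set (ℂ × ℂ)}

theorem isOpen_sliceS (hU : IsOpen U) (t : ℂ) : IsOpen {s | (t, s) ∈ U} :=
  hU.preimage (by fun_prop)

theorem isOpen_sliceT (hU : IsOpen U) (s : ℂ) : IsOpen {t | (t, s) ∈ U} :=
  hU.preimage (by fun_prop)

theorem hasDerivAt_dS {F : ℂ × ℂ → ℂ} (hU : IsOpen U) (hF : DifferentiableOn ℂ F U)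
    {q : ℂ × ℂ} (hq : q ∈ U) : HasDerivAt (fun s => F (q.1, s)) (dS F q) q.2 :=
  (((hF q hq).differentiableAt (hU.mem_nhds hq)).comp q.2
    ((differentiableAt_const q.1).prodMk differentiableAt_id)).hasDerivAt

theorem hasDerivAt_dT {F : ℂ × ℂ → ℂ} (hU : IsOpen U) (hF : DifferentiableOn ℂ F U)
    {q : ℂ × ℂ} (hq : q ∈ U) : HasDerivAt (fun t => F (t, q.2)) (dT F q) q.1 :=
  (((hF q hq).differentiableAt (hU.mem_nhds hq)).comp q.1
    (differentiableAt_id.prodMk (differentiableAt_const q.2))).hasDerivAt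

variable {g : ℕ} {x y : Fin g → ℂ × ℂ → ℂ}

theorem isDubrovinFlow_sliceS {b : Fin (2 * g + 1) → ℂ} (hU : IsOpen U)
    (hx : ∀ i, DifferentiableOn ℂ (x i) U) (hy : ∀ i, DifferentiableOn ℂ (y i) U)
    (hdist : ∀ p ∈ U, ∀ i j, i ≠ j → x i p ≠ x j p)
    (hy2 : ∀ p ∈ U, ∀ i, (y i p) ^ 2 = ∏ j, (x i p - b j))
    (hyne : ∀ p ∈ U, ∀ i, y i p ≠ 0)
    (hflowS : ∀ p ∈ U, ∀ i, dS (x i) p = 2 * y i p / alFd g x i p) (t : ℂ) :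
    IsDubrovinFlow (∏ j, (X - C (b j))) (fun i s => x i (t, s)) (fun i s => y i (t, s))
      {s | (t, s) ∈ U} where
  isOpen := isOpen_sliceS hU t
  injective s hs i j hij := by_contra fun hne => hdist _ hs i j hne hij
  sq_eq s hs i := by simpa [eval_prod] using hy2 _ hs i
  ne_zero s hs := hyne _ hs
  differentiableAt s hs i := (hasDerivAt_dS hU (hy i) hs).differentiableAt
  hasDerivAt s hs i := hflowS _ hs i ▸ hasDerivAt_dS hU (hx i) hs

theorem hasDerivAt_dS_of_sq_eq_prod (hU : IsOpen U) (hx : ∀ i, DifferentiableOn ℂ (x i) U)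
    (hflowS : ∀ p ∈ U, ∀ i, dS (x i) p = 2 * y i p / alFd g x i p)
    {β : ℂ} (hxβ : ∀ p ∈ U, ∀ i, x i p ≠ β) {α : ℂ × ℂ → ℂ} (hα : DifferentiableOn ℂ α U)
    (hα2 : ∀ p ∈ U, (α p) ^ 2 = ∏ i, (x i p - β)) {q : ℂ × ℂ} (hq : q ∈ U) :
    HasDerivAt (fun s => α (q.1, s)) (alPsi g x y β q * α q) q.2 := by
  obtain ⟨t, s⟩ := q
  exact hasDerivAt_of_sq_eq_prod_sub (x := fun i s => x i (t, s)) (w := fun i s => y i (t, s))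
    (hasDerivAt_dS hU hα hq).differentiableAt
    (eventually_of_mem ((isOpen_sliceS hU t).mem_nhds hq) fun _ hs => hα2 _ hs)
    (fun i => by simpa only [hflowS _ hq i, alFd] using hasDerivAt_dS hU (hx i) hq) (hxβ _ hq)

theorem hasDerivAt_dT_of_sq_eq_prod (hU : IsOpen U) (hx : ∀ i, DifferentiableOn ℂ (x i) U)
    (hflowT : ∀ p ∈ U, ∀ i,
      dT (x i) p = 2 * y i p * (-∑ j ∈ Finset.univ.erase i, x j p) / alFd g x i p)
    {β : ℂ} (hxβ : ∀ p ∈ U, ∀ i, x i p ≠ β) {α : ℂ × ℂ → ℂ} (hα : DifferentiableOn ℂ α U)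
    (hα2 : ∀ p ∈ U, (α p) ^ 2 = ∏ i, (x i p - β)) {q : ℂ × ℂ} (hq : q ∈ U) :
    HasDerivAt (fun t => α (t, q.2))
      (((β - ∑ i, x i q) * alPsi g x y β q + ∑ i, y i q / alFd g x i q) * α q) q.1 := by
  obtain ⟨t, s⟩ := q
  have h := hasDerivAt_of_sq_eq_prod_sub
    (w := fun i t => y i (t, s) * -∑ j ∈ univ.erase i, x j (t, s))
    (hasDerivAt_dT hU hα hq).differentiableAt
    (eventually_of_mem ((isOpen_sliceT hU s).mem_nhds hq) fun _ ht => hα2 _ ht)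
    (fun i => by simpa only [mul_assoc, hflowT _ hq i, alFd] using hasDerivAt_dT hU (hx i) hq)
    (hxβ _ hq)
  rwa [lagrangePsi_mul_neg_sum_erase _ (hxβ _ hq)] at h

end Slices

theorem stmt17_general
    (g : ℕ)
    (b : Fin (2 * g + 1) → ℂ)
    (U : Set (ℂ × ℂ)) (hU : IsOpen U)
    (x y : Fin g → ℂ × ℂ → ℂ)
    (hx : ∀ i, DifferentiableOn ℂ (x i) U)
    (hy : ∀ i, DifferentiableOn ℂ (y i) U)
    (hdist : ∀ p ∈ U, ∀ i j, i ≠ j → x i p ≠ x j p)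
    (hy2 : ∀ p ∈ U, ∀ i, (y i p) ^ 2 = ∏ j, (x i p - b j))
    (hyne : ∀ p ∈ U, ∀ i, y i p ≠ 0)
    (hflowS : ∀ p ∈ U, ∀ i, dS (x i) p = 2 * y i p / alFd g x i p)
    (hflowT : ∀ p ∈ U, ∀ i,
      dT (x i) p = 2 * y i p * (-∑ j ∈ Finset.univ.erase i, x j p) / alFd g x i p)
    (hx1 : ∀ p ∈ U, ∀ i, x i p ≠ b 0)
    (hx2 : ∀ p ∈ U, ∀ i, x i p ≠ b 1)
    (α₁ α₂ : ℂ × ℂ → ℂ)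
    (hα₁ : DifferentiableOn ℂ α₁ U) (hα₂ : DifferentiableOn ℂ α₂ U)
    (hα₁ne : ∀ p ∈ U, α₁ p ≠ 0)
    (hα₁2 : ∀ p ∈ U, (α₁ p) ^ 2 = ∏ i : Fin g, (x i p - b 0))
    (hα₂2 : ∀ p ∈ U, (α₂ p) ^ 2 = ∏ i : Fin g, (x i p - b 1))
 :
    ∀ p ∈ U,
      4 * dT (fun q => α₂ q / α₁ q) p
        - (2 * (-(∑ j, b j)) + 3 * (b 0 + b 1)) * dS (fun q => α₂ q / α₁ q) p
        + 6 * (alPsi g x y (b 0) p) ^ 2 * dS (fun q => α₂ q / α₁ q) p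
        - dS (dS (dS (fun q => α₂ q / α₁ q))) p
        + 6 * (b 0 - b 1) * alPsi g x y (b 0) p * (α₂ p / α₁ p) = 0 := by
  intro p hp
  have hflow := isDubrovinFlow_sliceS hU hx hy hdist hy2 hyne hflowS p.1
  have hf : (∏ j, (X - C (b j))).Monic := monic_prod_of_monic _ _ fun j _ => monic_X_sub_C (b j)
  have hfdeg : (∏ j, (X - C (b j))).natDegree = 2 * Fintype.card (Fin g) + 1 := by simp
  have hψ : ∀ k, (∀ q ∈ U, ∀ i, x i q ≠ b k) → ∀ s ∈ {s | (p.1, s) ∈ U},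
      HasDerivAt (fun s => alPsi g x y (b k) (p.1, s))
        (b k + (-∑ j, b j) + 2 * ∑ i, x i (p.1, s) - alPsi g x y (b k) (p.1, s) ^ 2) s :=
    fun k hk s hs => by
      have h := hflow.hasDerivAt_lagrangePsi hf hfdeg
        (by simp [eval_prod, prod_eq_zero (mem_univ k)]) (fun t ht => hk _ ht) hs
      rw [prod_X_sub_C_nextCoeff] at h
      exact h
  have hR : ∀ s ∈ {s | (p.1, s) ∈ U}, HasDerivAt (fun s => α₂ (p.1, s) / α₁ (p.1, s))
      ((alPsi g x y (b 1) (p.1, s) - alPsi g x y (b 0) (p.1, s)) * (α₂ (p.1, s) / α₁ (p.1, s))) s :=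
    fun s hs => (hasDerivAt_dS_of_sq_eq_prod hU hx hflowS hx2 hα₂ hα₂2 hs).div_of_eq_mul_self
      (hasDerivAt_dS_of_sq_eq_prod hU hx hflowS hx1 hα₁ hα₁2 hs) (hα₁ne _ hs)
  have hRT := (hasDerivAt_dT_of_sq_eq_prod hU hx hflowT hx2 hα₂ hα₂2 hp).div_of_eq_mul_self
    (hasDerivAt_dT_of_sq_eq_prod hU hx hflowT hx1 hα₁ hα₁2 hp) (hα₁ne p hp)
  have hR3 := deriv_deriv_deriv_of_riccati hflow.isOpen (hψ 0 hx1) (hψ 1 hx2) hR hp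
  rw [dT, hRT.deriv, dS, (hR p.2 hp).deriv]
  change _ - deriv (deriv (deriv fun s => α₂ (p.1, s) / α₁ (p.1, s))) p.2 + _ = 0
  rw [hR3]
  ring

theorem stmt17
    (g : ℕ) (hg : 2 ≤ g)
    (b : Fin (2 * g + 1) → ℂ) (hb : Function.Injective b)
    (U : Set (ℂ × ℂ)) (hU : IsOpen U) (hUne : U.Nonempty)
    (x y : Fin g → ℂ × ℂ → ℂ)
    (hx : ∀ i, DifferentiableOn ℂ (x i) U)
    (hy : ∀ i, DifferentiableOn ℂ (y i) U)
    (hdist : ∀ p ∈ U, ∀ i j, i ≠ j → x i p ≠ x j p)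
    (hy2 : ∀ p ∈ U, ∀ i, (y i p) ^ 2 = ∏ j, (x i p - b j))
    (hyne : ∀ p ∈ U, ∀ i, y i p ≠ 0)
    (hflowS : ∀ p ∈ U, ∀ i, dS (x i) p = 2 * y i p / alFd g x i p)
    (hflowT : ∀ p ∈ U, ∀ i,
      dT (x i) p = 2 * y i p * (-∑ j ∈ Finset.univ.erase i, x j p) / alFd g x i p)
    (hx1 : ∀ p ∈ U, ∀ i, x i p ≠ b 0)
    (hx2 : ∀ p ∈ U, ∀ i, x i p ≠ b 1)
    (α₁ α₂ : ℂ × ℂ → ℂ)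
    (hα₁ : DifferentiableOn ℂ α₁ U) (hα₂ : DifferentiableOn ℂ α₂ U)
    (hα₁ne : ∀ p ∈ U, α₁ p ≠ 0) (hα₂ne : ∀ p ∈ U, α₂ p ≠ 0)
    (hα₁2 : ∀ p ∈ U, (α₁ p) ^ 2 = ∏ i : Fin g, (x i p - b 0))
    (hα₂2 : ∀ p ∈ U, (α₂ p) ^ 2 = ∏ i : Fin g, (x i p - b 1))
 :
    ∀ p ∈ U,
      4 * dT (fun q => α₂ q / α₁ q) p
        - (2 * (-(∑ j, b j)) + 3 * (b 0 + b 1)) * dS (fun q => α₂ q / α₁ q) p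
        + 6 * (alPsi g x y (b 0) p) ^ 2 * dS (fun q => α₂ q / α₁ q) p
        - dS (dS (dS (fun q => α₂ q / α₁ q))) p
        + 6 * (b 0 - b 1) * alPsi g x y (b 0) p * (α₂ p / α₁ p) = 0 :=
  stmt17_general g b U hU x y hx hy hdist hy2 hyne hflowS hflowT hx1 hx2 α₁ α₂ hα₁ hα₂ hα₁ne hα₁2
    hα₂2
end
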